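/- arXiv:2203.14784 — 4 statements merged into one kernel-verified Lean document; each statement's English description precedes it below -/
import Mathlib

section
/- Let g = [[a,b],[c,d]] ∈ SL(2,ℂ). Then g can be written as a product p⁺ · k · n, where p⁺ = [[1,x],[0,1]] for some x ∈ ℂ, k = [[γ,0],[0,γ⁻¹]] for some γ ∈ ℂ×, and n = [[1+is, -is],[is, 1-is]] for some s ∈ ℂ, if and only if c + d ≠ 0. In that case γ = 1/(c+d) and s = -ic/(c+d). -/
open Matrix

noncomputable def pplus (x : ℂ) : Matrix (Fin 2) (Fin 2) ℂ := !![1, x; 0, 1]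

noncomputable def kmat (γ : ℂ) : Matrix (Fin 2) (Fin 2) ℂ := !![γ, 0; 0, γ⁻¹]

noncomputable def nmat (s : ℂ) : Matrix (Fin 2) (Fin 2) ℂ :=
  !![1 + Complex.I * s, -(Complex.I * s); Complex.I * s, 1 - Complex.I * s]

/-! Since `p⁺` fixes the bottom row, the bottom row of `p⁺ k n` is `γ⁻¹ (is, 1 - is)`: its entries
sum to `γ⁻¹` and its first entry is `γ⁻¹ is`, which forces `γ` and `s`. Conversely, for `c + d ≠ 0`
these values of `γ` and `s` reproduce the bottom row of `g`, and `det g = 1` makes the top row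
agree as well once `x` is chosen to match the sum `a + b`. -/

open Complex

lemma pplus_mul_kmat_mul_nmat (x γ s : ℂ) : pplus x * kmat γ * nmat s =
    !![γ * (1 + I * s) + x * γ⁻¹ * (I * s), -(γ * (I * s)) + x * γ⁻¹ * (1 - I * s);
       γ⁻¹ * (I * s), γ⁻¹ * (1 - I * s)] := by
  ext i j
  fin_cases i <;> fin_cases j <;>
    simp [pplus, kmat, nmat, Matrix.mul_apply, Fin.sum_univ_two]

lemma pplus_mul_kmat_mul_nmat_apply_one_zero (x γ s : ℂ) :
    (pplus x * kmat γ * nmat s) 1 0 = γ⁻¹ * (I * s) := by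
  simp [pplus_mul_kmat_mul_nmat]

lemma pplus_mul_kmat_mul_nmat_bottom_row_sum (x γ s : ℂ) :
    (pplus x * kmat γ * nmat s) 1 0 + (pplus x * kmat γ * nmat s) 1 1 = γ⁻¹ := by
  simp only [pplus_mul_kmat_mul_nmat, of_apply, cons_val', cons_val_zero, cons_val_one,
    empty_val', cons_val_fin_one]
  ring

lemma eq_pplus_mul_kmat_mul_nmat {g : Matrix (Fin 2) (Fin 2) ℂ} (hdet : g.det = 1)
    (h : g 1 0 + g 1 1 ≠ 0) :
    g = pplus ((g 0 0 + g 0 1 - (g 1 0 + g 1 1)⁻¹) / (g 1 0 + g 1 1))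
      * kmat (g 1 0 + g 1 1)⁻¹ * nmat (-I * g 1 0 / (g 1 0 + g 1 1)) := by
  rw [det_fin_two] at hdet
  have hIs : I * (-I * g 1 0 / (g 1 0 + g 1 1)) = g 1 0 / (g 1 0 + g 1 1) := by
    rw [← mul_div_assoc, ← mul_assoc, mul_neg, I_mul_I, neg_neg, one_mul]
  rw [pplus_mul_kmat_mul_nmat, hIs, inv_inv]
  ext i j
  fin_cases i <;> fin_cases j <;> simp only [Fin.zero_eta, Fin.mk_one, of_apply, cons_val',
    cons_val_zero, cons_val_one, empty_val', cons_val_fin_one] <;> field_simp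
  · linear_combination (g 1 0 + g 1 1) * hdet
  · linear_combination -(g 1 0 + g 1 1) * hdet
  · ring

lemma params_of_eq_pplus_mul_kmat_mul_nmat {g : Matrix (Fin 2) (Fin 2) ℂ} {x γ s : ℂ}
    (hγ : γ ≠ 0) (hg : g = pplus x * kmat γ * nmat s) :
    γ = (g 1 0 + g 1 1)⁻¹ ∧ s = -I * g 1 0 / (g 1 0 + g 1 1) := by
  subst hg
  rw [pplus_mul_kmat_mul_nmat_bottom_row_sum, pplus_mul_kmat_mul_nmat_apply_one_zero, inv_inv]
  refine ⟨rfl, ?_⟩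
  field_simp
  linear_combination s * I_sq

/-- for `g ∈ SL(2,ℂ)`, `g = p⁺ k n` with `p⁺ ∈ P⁺`, `k ∈ K_ℂ`, `n ∈ N_ℂ`
iff `c + d ≠ 0`, and in that case `γ = 1/(c+d)` and `s = -ic/(c+d)`. -/
theorem sl2_pkn_decomposition (g : Matrix (Fin 2) (Fin 2) ℂ) (hdet : g.det = 1) :
    ((∃ x γ s : ℂ, γ ≠ 0 ∧ g = pplus x * kmat γ * nmat s) ↔ g 1 0 + g 1 1 ≠ 0) ∧
    (∀ x γ s : ℂ, γ ≠ 0 → g = pplus x * kmat γ * nmat s →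
      γ = (g 1 0 + g 1 1)⁻¹ ∧ s = -Complex.I * g 1 0 / (g 1 0 + g 1 1)) := by
  refine ⟨⟨?_, fun h => ⟨_, _, _, inv_ne_zero h, eq_pplus_mul_kmat_mul_nmat hdet h⟩⟩,
    fun _ _ _ => params_of_eq_pplus_mul_kmat_mul_nmat⟩
  rintro ⟨x, γ, s, hγ, rfl⟩
  rw [pplus_mul_kmat_mul_nmat_bottom_row_sum]
  exact inv_ne_zero hγ
end

section
/- If g = [[a,b],[c,d]] ∈ SL(2,ℂ) maps the closed unit disc into itself under the Möbius action z ↦ (az+b)/(cz+d), then c + d ≠ 0, and consequently g ∈ P⁺ K_ℂ N_ℂ. -/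
open Matrix

/-!
Evaluating at `z = 1`: if `c + d = 0` then also `a + b = 0`, and then
`a * d - b * c = (a + b) * d - b * (c + d) = 0`.

For the decomposition, write `t = i s`. The bottom row of `pplus x * kmat γ * nmat s` is
`γ⁻¹ • (t, 1 - t)`, so it equals `(c, d)` exactly when `γ = (c + d)⁻¹` and `t = c / (c + d)`;
the top row then sums to `γ + x γ⁻¹ = a + b`, which determines `x`, and the determinant
condition makes both top entries come out right.
-/

theorem add_ne_zero_of_det_ne_zero_of_norm_add_le {a b c d : ℂ} (hdet : a * d - b * c ≠ 0)
    (h : ‖a + b‖ ≤ ‖c + d‖) : c + d ≠ 0 := by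
  intro hcd
  have hab : a + b = 0 := norm_le_zero_iff.mp (by simpa [hcd] using h)
  exact hdet (by linear_combination d * hab - b * hcd)

theorem nmat_neg_I_mul (t : ℂ) : nmat (-Complex.I * t) = !![1 + t, -t; t, 1 - t] := by
  have hIt : Complex.I * (-Complex.I * t) = t := by
    rw [← mul_assoc, mul_neg, Complex.I_mul_I, neg_neg, one_mul]
  simp only [nmat, hIt]

theorem pplus_mul_kmat_mul (x γ p q r u : ℂ) :
    pplus x * kmat γ * !![p, q; r, u] =
      !![γ * p + x * γ⁻¹ * r, γ * q + x * γ⁻¹ * u; γ⁻¹ * r, γ⁻¹ * u] := by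
  simp only [pplus, kmat, mul_fin_two]
  congr <;> ring

theorem exists_eq_pplus_mul_kmat_mul_nmat {a b c d : ℂ} (hdet : a * d - b * c = 1)
    (hcd : c + d ≠ 0) :
    ∃ x γ s : ℂ, γ ≠ 0 ∧ !![a, b; c, d] = pplus x * kmat γ * nmat s := by
  refine ⟨((a + b) * (c + d) - 1) / (c + d) ^ 2, (c + d)⁻¹, -Complex.I * (c / (c + d)),
    inv_ne_zero hcd, ?_⟩
  rw [nmat_neg_I_mul, pplus_mul_kmat_mul, inv_inv]
  simp only [EmbeddingLike.apply_eq_iff_eq, vecCons_inj, and_true]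
  refine ⟨⟨?_, ?_⟩, ?_, ?_⟩
  · field_simp
    linear_combination (c + d) * hdet
  · field_simp
    linear_combination (-(c + d)) * hdet
  · field_simp
  · field_simp
    ring

/-- if `g = [[a,b],[c,d]] ∈ SL(2,ℂ)` maps the closed unit disc into itself
under the Möbius action `z ↦ (az+b)/(cz+d)`, then `c + d ≠ 0` and hence
`g ∈ P⁺ K_ℂ N_ℂ`. -/
theorem closed_disc_compression_mem_pkn (a b c d : ℂ) (hdet : a * d - b * c = 1)
    (hmap : ∀ z : ℂ, ‖z‖ ≤ 1 → ‖a * z + b‖ ≤ ‖c * z + d‖) :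
    c + d ≠ 0 ∧
    ∃ x γ s : ℂ, γ ≠ 0 ∧ !![a, b; c, d] = pplus x * kmat γ * nmat s := by
  have hcd : c + d ≠ 0 :=
    add_ne_zero_of_det_ne_zero_of_norm_add_le (hdet ▸ one_ne_zero)
      (by simpa using hmap 1 (by simp))
  exact ⟨hcd, exists_eq_pplus_mul_kmat_mul_nmat hdet hcd⟩
end

section
/- The interior of the semigroup S = {s ∈ SL(2,ℂ) : s⁻¹·D ⊆ D} is S° = {s ∈ SL(2,ℂ) : s⁻¹·D̄ ⊆ D}, and S° is nonempty. -/
open Matrix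

/-- `SL(2,ℂ)` carries the subspace topology of the space of `2×2` complex matrices. -/
noncomputable instance : TopologicalSpace (Matrix.SpecialLinearGroup (Fin 2) ℂ) :=
  TopologicalSpace.induced (fun g => (g : Matrix (Fin 2) (Fin 2) ℂ)) inferInstance

/-- `g` maps the open unit disc into itself under the Möbius action. -/
def mapsDiscIntoDisc (g : Matrix.SpecialLinearGroup (Fin 2) ℂ) : Prop :=
  ∀ z : ℂ, ‖z‖ < 1 →
    ‖((g : Matrix (Fin 2) (Fin 2) ℂ) 0 0 * z + (g : Matrix (Fin 2) (Fin 2) ℂ) 0 1)‖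
      < ‖((g : Matrix (Fin 2) (Fin 2) ℂ) 1 0 * z + (g : Matrix (Fin 2) (Fin 2) ℂ) 1 1)‖

/-- `g` maps the closed unit disc into the open unit disc under the Möbius action. -/
def mapsClosedDiscIntoDisc (g : Matrix.SpecialLinearGroup (Fin 2) ℂ) : Prop :=
  ∀ z : ℂ, ‖z‖ ≤ 1 →
    ‖((g : Matrix (Fin 2) (Fin 2) ℂ) 0 0 * z + (g : Matrix (Fin 2) (Fin 2) ℂ) 0 1)‖
      < ‖((g : Matrix (Fin 2) (Fin 2) ℂ) 1 0 * z + (g : Matrix (Fin 2) (Fin 2) ℂ) 1 1)‖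

/-! If `s⁻¹` sends a point `z₀` of the closed disc outside `D`, then so does
`s⁻¹ * diag(eˣ, e⁻ˣ)` at the point `e²ˣ z₀`, which lies in `D` for `x < 0`; letting `x → 0⁻`
these elements approach `s`, so `s` is not interior to `S`. Conversely `S°` is open by
compactness of the closed disc, and the diagonal contractions `diag(eʷ, e⁻ʷ)`, `re w < 0`,
lie in it. -/

open Complex Filter Topology

local notation "SL₂" => Matrix.SpecialLinearGroup (Fin 2) ℂ

-- The topology above agrees with Mathlib's on `SL₂` only up to unfolding, so the instance is
-- not found by unification.
instance : IsTopologicalGroup SL₂ := Matrix.SpecialLinearGroup.topologicalGroup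

/-- `g • z ∈ D` on the Riemann sphere: if `g 1 0 * z + g 1 1 = 0` then `g • z = ∞`, and the
inequality fails. -/
def sendsIntoDisc (g : SL₂) (z : ℂ) : Prop :=
  ‖g 0 0 * z + g 0 1‖ < ‖g 1 0 * z + g 1 1‖

theorem isOpen_setOf_sendsIntoDisc_inv : IsOpen {p : SL₂ × ℂ | sendsIntoDisc p.1⁻¹ p.2} :=
  isOpen_lt (by fun_prop) (by fun_prop)

theorem isOpen_setOf_mapsClosedDiscIntoDisc_inv :
    IsOpen {s : SL₂ | mapsClosedDiscIntoDisc s⁻¹} := by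
  refine isOpen_iff_eventually.2 fun s hs ↦ ?_
  have := (isCompact_closedBall (0 : ℂ) 1).eventually_forall_of_forall_eventually
    (P := fun t z ↦ sendsIntoDisc t⁻¹ z) fun z hz ↦
      isOpen_setOf_sendsIntoDisc_inv.mem_nhds (hs z (mem_closedBall_zero_iff.1 hz))
  exact this.mono fun t ht z hz ↦ ht z (mem_closedBall_zero_iff.2 hz)

noncomputable def expDiag (w : ℂ) : SL₂ :=
  ⟨!![exp w, 0; 0, exp (-w)], by simp [Matrix.det_fin_two_of, ← exp_add]⟩

@[simp]
theorem coe_expDiag (w : ℂ) : (expDiag w : Matrix (Fin 2) (Fin 2) ℂ) = !![exp w, 0; 0, exp (-w)] :=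
  rfl

theorem continuous_expDiag : Continuous expDiag :=
  continuous_induced_rng.2 <| continuous_pi fun i ↦ continuous_pi fun j ↦ by
    fin_cases i <;> fin_cases j <;> simp <;> fun_prop

theorem expDiag_zero : expDiag 0 = 1 := by
  ext i j; fin_cases i <;> fin_cases j <;> simp

theorem expDiag_add (v w : ℂ) : expDiag (v + w) = expDiag v * expDiag w := by
  ext i j; fin_cases i <;> fin_cases j <;> simp [exp_add, mul_comm]

theorem inv_expDiag (w : ℂ) : (expDiag w)⁻¹ = expDiag (-w) :=
  (eq_inv_of_mul_eq_one_left <| by rw [← expDiag_add, neg_add_cancel, expDiag_zero]).symm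

theorem sendsIntoDisc_mul_expDiag (g : SL₂) (w z : ℂ) :
    sendsIntoDisc (g * expDiag w) z ↔ sendsIntoDisc g (exp (2 * w) * z) := by
  have key (a b : ℂ) :
      a * exp w * z + b * exp (-w) = exp (-w) * (a * (exp (2 * w) * z) + b) := by
    rw [two_mul, exp_add, exp_neg]
    field_simp
  simp only [sendsIntoDisc, Matrix.SpecialLinearGroup.coe_mul, coe_expDiag, Matrix.mul_apply,
    Fin.sum_univ_two]
  simp [key]

theorem mapsClosedDiscIntoDisc_inv_of_mem_interior {s : SL₂}
    (hs : s ∈ interior {s : SL₂ | mapsDiscIntoDisc s⁻¹}) : mapsClosedDiscIntoDisc s⁻¹ := by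
  intro z₀ hz₀
  have hnear : ∀ᶠ w in 𝓝 (0 : ℂ), mapsDiscIntoDisc (expDiag w * s)⁻¹ := by
    have : Tendsto (fun w ↦ expDiag w * s) (𝓝 0) (𝓝 s) :=
      (continuous_expDiag.mul continuous_const).tendsto' 0 s (by simp [expDiag_zero])
    exact this.eventually (isOpen_interior.mem_nhds hs) |>.mono fun _ h ↦ interior_subset h
  have hreal : Tendsto (fun x : ℝ ↦ (x : ℂ)) (𝓝[<] 0) (𝓝 0) :=
    (continuous_ofReal.tendsto' 0 0 ofReal_zero).mono_left nhdsWithin_le_nhds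
  obtain ⟨x, hx, hmaps⟩ := ((eventually_mem_nhdsWithin).and (hreal.eventually hnear)).exists
  have hz : ‖exp (2 * x) * z₀‖ < 1 := by
    rw [norm_mul, ← ofReal_ofNat, ← ofReal_mul, norm_exp_ofReal]
    calc Real.exp (2 * x) * ‖z₀‖ ≤ Real.exp (2 * x) :=
          mul_le_of_le_one_right (Real.exp_pos _).le hz₀
      _ < 1 := Real.exp_lt_one_iff.2 (by linarith [Set.mem_Iio.1 hx])
  have : sendsIntoDisc (expDiag x * s)⁻¹ (exp (2 * x) * z₀) := hmaps _ hz
  rwa [_root_.mul_inv_rev, inv_expDiag, sendsIntoDisc_mul_expDiag, ← mul_assoc, ← exp_add,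
    mul_neg, neg_add_cancel, exp_zero, one_mul] at this

theorem mapsClosedDiscIntoDisc_expDiag {w : ℂ} (hw : w.re < 0) :
    mapsClosedDiscIntoDisc (expDiag w) := by
  intro z hz
  simp only [coe_expDiag, Matrix.of_apply, Matrix.cons_val', Matrix.cons_val_zero,
    Matrix.cons_val_one, Matrix.empty_val', Matrix.cons_val_fin_one, add_zero, zero_mul, zero_add,
    norm_mul, norm_exp, neg_re]
  calc Real.exp w.re * ‖z‖ ≤ Real.exp w.re := mul_le_of_le_one_right (Real.exp_pos _).le hz
    _ < Real.exp (-w.re) := Real.exp_lt_exp.2 (by linarith)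

/-- the interior of `S = {s : s⁻¹·D ⊆ D}` is
`S° = {s : s⁻¹·D̄ ⊆ D}`, and `S°` is nonempty. -/
theorem compression_semigroup_interior :
    interior {s : Matrix.SpecialLinearGroup (Fin 2) ℂ | mapsDiscIntoDisc s⁻¹}
      = {s : Matrix.SpecialLinearGroup (Fin 2) ℂ | mapsClosedDiscIntoDisc s⁻¹} ∧
    {s : Matrix.SpecialLinearGroup (Fin 2) ℂ | mapsClosedDiscIntoDisc s⁻¹}.Nonempty :=
  ⟨Set.Subset.antisymm (fun _ ↦ mapsClosedDiscIntoDisc_inv_of_mem_interior) <|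
      interior_maximal (fun _ h z hz ↦ h z hz.le) isOpen_setOf_mapsClosedDiscIntoDisc_inv,
    ⟨expDiag 1, show mapsClosedDiscIntoDisc (expDiag 1)⁻¹ by
      rw [inv_expDiag]
      exact mapsClosedDiscIntoDisc_expDiag (by simp)⟩⟩
end

section
/- Let G_ℂ be a connected complex Lie group with holomorphic involution θ, G a real form acting on a bounded domain D, and S, Ξ the compression semigroups Ξ = {s ∈ G_ℂ : s·D ⊆ D}, S = Ξ⁻¹. Suppose G ⊆ P⁺K_ℂN_ℂ and let σ: G_ℂ → G_ℂ be the antiholomorphic conjugation fixing G, with s* = σ(s)⁻¹. If Ξ* = Ξ, (P⁻)* = P⁺, G_ℂ acts transitively on D with stabilizer of the base point 0 equal to K_ℂP⁻, and every s ∈ Ξ satisfies s*·0 ∈ D, then Ξ ⊆ P⁺K_ℂN_ℂ. -/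
open scoped Pointwise

/-- abstract semigroup decomposition. If `G ⊆ P⁺K_ℂN_ℂ`, `Ξ* = Ξ`,
`(P⁻)* = P⁺`, `K_ℂ* = K_ℂ`, `G_ℂ` acts transitively on `D` with stabilizer of the base
point `K_ℂP⁻`, `K_ℂ` normalizes `P⁺`, and every `s ∈ Ξ` satisfies `s*·x₀ ∈ D`, then
`Ξ ⊆ P⁺K_ℂN_ℂ`. Here `s* = σ(s)⁻¹` for the conjugation `σ` fixing `G`. -/
theorem compression_semigroup_pkn_decomposition
    {GC : Type*} [Group GC] {X : Type*} [MulAction GC X]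
    (D : Set X) (x0 : X) (hx0 : x0 ∈ D)
    (G Pp Pm Kc Nc : Subgroup GC)
    (σ : GC →* GC) (hσσ : ∀ g, σ (σ g) = g) (hσG : ∀ g ∈ G, σ g = g)
    (Ξ : Set GC) (hΞ : Ξ = {s : GC | ∀ x ∈ D, s • x ∈ D})
    (hG : (G : Set GC) ⊆ (Pp : Set GC) * (Kc : Set GC) * (Nc : Set GC))
    (hΞstar : ∀ s ∈ Ξ, (σ s)⁻¹ ∈ Ξ)
    (hPm_star : ∀ p ∈ Pm, (σ p)⁻¹ ∈ Pp)
    (hKc_star : ∀ k ∈ Kc, (σ k)⁻¹ ∈ Kc)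
    (htrans : ∀ x ∈ D, ∃ g ∈ G, g • x0 = x)
    (hstab : ∀ h : GC, h • x0 = x0 → h ∈ (Kc : Set GC) * (Pm : Set GC))
    (hnorm : ∀ k ∈ Kc, ∀ p ∈ Pp, k * p * k⁻¹ ∈ Pp)
    (hstar0 : ∀ s ∈ Ξ, (σ s)⁻¹ • x0 ∈ D) :
    Ξ ⊆ (Pp : Set GC) * (Kc : Set GC) * (Nc : Set GC) := by
  intro s hs
  obtain ⟨g, hgG, hgx⟩ := htrans _ (hstar0 s hs)
  have hfix : (g⁻¹ * (σ s)⁻¹) • x0 = x0 := by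
    rw [mul_smul, ← hgx, ← mul_smul, inv_mul_cancel, one_smul]
  obtain ⟨k, hk, p, hp, hkp⟩ := hstab _ hfix
  have hkp' : k * p = g⁻¹ * (σ s)⁻¹ := hkp
  have hσs : (σ s)⁻¹ = g * (k * p) := by rw [hkp']; group
  have hs_eq : s = (σ p)⁻¹ * (σ k)⁻¹ * g⁻¹ := by
    have h1 : σ s = (g * (k * p))⁻¹ := by rw [← hσs, inv_inv]
    have h2 : s = σ (σ s) := (hσσ s).symm
    rw [h2, h1]
    simp [mul_inv_rev, map_mul, map_inv, hσG g hgG, mul_assoc]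
  obtain ⟨pk, hpk, n, hn, hpkn⟩ := hG (G.inv_mem hgG : g⁻¹ ∈ G)
  obtain ⟨p1, hp1, k1, hk1, hp1k1⟩ := hpk
  set P := (σ p)⁻¹ with hP
  set K := (σ k)⁻¹ with hK
  have hPmem : P ∈ Pp := hPm_star p hp
  have hKmem : K ∈ Kc := hKc_star k hk
  have key : s = (P * (K * p1 * K⁻¹)) * (K * k1) * n := by
    rw [hs_eq, ← hpkn, ← hp1k1]; group
  refine ⟨(P * (K * p1 * K⁻¹)) * (K * k1), ⟨P * (K * p1 * K⁻¹), Pp.mul_mem hPmem (hnorm K hKmem p1 hp1), K * k1, Kc.mul_mem hKmem hk1, rfl⟩, n, hn, key.symm⟩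
end
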